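/- Suppose w : Y × [0,T] → ℝ is continuous on an open subset Y of a Riemannian manifold, and for every c ∈ ℝ the level sets t ↦ {x : w(x,t) = c} form a weak set flow in Y. Then for every α > 0 and every c > 0, the family t ↦ {x : e^{−αt} w(x,t) ≥ c} is a weak set flow in Y, and likewise t ↦ {x : e^{−αt} w(x,t) ≤ −c} is a weak set flow in Y. -/
import Mathlib


open Set

/-- The spatial gradient of `u : ℝ^(n+1) × ℝ → ℝ` at a spacetime point. -/
noncomputable def spatialGrad {n : ℕ} (u : EuclideanSpace ℝ (Fin (n + 1)) × ℝ → ℝ)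
    (p : EuclideanSpace ℝ (Fin (n + 1)) × ℝ) : EuclideanSpace ℝ (Fin (n + 1)) :=
  gradient (fun y => u (y, p.2)) p.1

/-- The spatial divergence of a time-dependent vector field at a spacetime point. -/
noncomputable def spatialDiv {n : ℕ}
    (V : EuclideanSpace ℝ (Fin (n + 1)) × ℝ → EuclideanSpace ℝ (Fin (n + 1)))
    (p : EuclideanSpace ℝ (Fin (n + 1)) × ℝ) : ℝ :=
  ∑ i, fderiv ℝ (fun y => V (y, p.2) i) p.1 (EuclideanSpace.single i 1)

/-- The time derivative `u_t` at a spacetime point. -/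
noncomputable def timeDeriv {n : ℕ} (u : EuclideanSpace ℝ (Fin (n + 1)) × ℝ → ℝ)
    (p : EuclideanSpace ℝ (Fin (n + 1)) × ℝ) : ℝ :=
  deriv (fun s => u (p.1, s)) p.2

/-- The level set mean curvature flow operator
`Φ[u] = u_t − |∇u| div(∇u/|∇u|)`. -/
noncomputable def levelSetOp {n : ℕ} (u : EuclideanSpace ℝ (Fin (n + 1)) × ℝ → ℝ)
    (p : EuclideanSpace ℝ (Fin (n + 1)) × ℝ) : ℝ :=
  timeDeriv u p - ‖spatialGrad u p‖ *
    spatialDiv (fun q => ‖spatialGrad u q‖⁻¹ • spatialGrad u q) p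

/-- A smooth mean curvature flow `t ∈ [a,b] ↦ S t` of smooth, closed (compact embedded)
hypersurfaces inside `W`, presented as the regular zero level sets of a smooth function
`u` satisfying the level set equation `Φ[u] = 0` on its zero set. -/
def IsSmoothClosedMCF {n : ℕ} (W : Set (EuclideanSpace ℝ (Fin (n + 1)))) (a b : ℝ)
    (S : ℝ → Set (EuclideanSpace ℝ (Fin (n + 1)))) : Prop :=
  (∀ t ∈ Set.Icc a b, IsCompact (S t) ∧ S t ⊆ W) ∧
  ∃ (V : Set (EuclideanSpace ℝ (Fin (n + 1)) × ℝ))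
    (u : EuclideanSpace ℝ (Fin (n + 1)) × ℝ → ℝ),
    IsOpen V ∧ ContDiffOn ℝ (⊤ : ℕ∞) u V ∧
    (∀ t ∈ Set.Icc a b, S t = {x | (x, t) ∈ V ∧ u (x, t) = 0}) ∧
    (∀ p ∈ V, u p = 0 → spatialGrad u p ≠ 0 ∧ levelSetOp u p = 0)

/-- A weak set flow `t ∈ I ↦ M t` in an open set `W`: the spacetime track is relatively
closed in `W × I`, and any classical mean curvature flow of smooth closed hypersurfaces
in `W` that is initially disjoint from `M` remains disjoint from `M`. -/
def IsWeakSetFlow {n : ℕ} (W : Set (EuclideanSpace ℝ (Fin (n + 1)))) (I : Set ℝ)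
    (M : ℝ → Set (EuclideanSpace ℝ (Fin (n + 1)))) : Prop :=
  (∀ t ∈ I, M t ⊆ W) ∧
  (∀ p : EuclideanSpace ℝ (Fin (n + 1)) × ℝ,
    p ∈ closure {q : EuclideanSpace ℝ (Fin (n + 1)) × ℝ | q.2 ∈ I ∧ q.1 ∈ M q.2} →
    p.1 ∈ W → p.2 ∈ I → p.1 ∈ M p.2) ∧
  ∀ a b : ℝ, a ≤ b → Set.Icc a b ⊆ I →
    ∀ S : ℝ → Set (EuclideanSpace ℝ (Fin (n + 1))), IsSmoothClosedMCF W a b S →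
      Disjoint (S a) (M a) → ∀ t ∈ Set.Icc a b, Disjoint (S t) (M t)

/-- Suppose `w : Y × [0,T] → ℝ` is continuous on an open set `Y`, and for every `c` the
level sets `t ↦ {x ∈ Y : w(x,t) = c}` form a weak set flow in `Y`.  Then for every
`α > 0` and `c > 0`, `t ↦ {x ∈ Y : e^{−αt} w(x,t) ≥ c}` is a weak set flow in `Y`, and
likewise `t ↦ {x ∈ Y : e^{−αt} w(x,t) ≤ −c}` is a weak set flow in `Y`. -/
theorem weakSetFlow_exp_barrier {n : ℕ} (Y : Set (EuclideanSpace ℝ (Fin (n + 1))))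
    (hY : IsOpen Y) (T : ℝ) (hT : 0 ≤ T)
    (w : EuclideanSpace ℝ (Fin (n + 1)) × ℝ → ℝ)
    (hw : ContinuousOn w (Y ×ˢ Set.Icc 0 T))
    (hlevel : ∀ c : ℝ, IsWeakSetFlow Y (Set.Icc 0 T)
      (fun t => {x ∈ Y | w (x, t) = c}))
    (α : ℝ) (hα : 0 < α) (c : ℝ) (hc : 0 < c) :
    IsWeakSetFlow Y (Set.Icc 0 T)
      (fun t => {x ∈ Y | c ≤ Real.exp (-α * t) * w (x, t)}) ∧
    IsWeakSetFlow Y (Set.Icc 0 T)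
      (fun t => {x ∈ Y | Real.exp (-α * t) * w (x, t) ≤ -c}) := by
  constructor
  · refine ⟨fun t _ x hx => hx.1, ?_, ?_⟩
    · -- relative closedness
      rintro ⟨x, t⟩ hp hxY htI
      refine ⟨hxY, ?_⟩
      set A : Set (EuclideanSpace ℝ (Fin (n + 1)) × ℝ) :=
        {q | q.2 ∈ Set.Icc 0 T ∧ q.1 ∈ Y ∧ c ≤ Real.exp (-α * q.2) * w (q.1, q.2)} with hA
      have hne : (nhdsWithin (x, t) A).NeBot := mem_closure_iff_nhdsWithin_neBot.mp hp
      have hAsub : A ⊆ Y ×ˢ Set.Icc 0 T := fun q hq => ⟨hq.2.1, hq.1⟩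
      have hcw : ContinuousWithinAt (fun q : EuclideanSpace ℝ (Fin (n + 1)) × ℝ =>
          Real.exp (-α * q.2) * w q) A (x, t) := by
        refine ContinuousWithinAt.mul ?_ (((hw (x, t) ⟨hxY, htI⟩).mono hAsub))
        exact (Real.continuous_exp.comp (continuous_const.mul continuous_snd)).continuousWithinAt
      refine ge_of_tendsto hcw.tendsto ?_
      filter_upwards [eventually_mem_nhdsWithin] with q hq
      exact hq.2.2
    · -- avoidance
      intro a b hab hI S hS hdisj t ht
      rw [Set.disjoint_left]
      rintro x hxS ⟨hxY, hxw⟩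
      set c' : ℝ := w (x, t) with hc'
      have hpos : (0:ℝ) < Real.exp (-α * t) := Real.exp_pos _
      have hc'pos : 0 < c' := by nlinarith
      have hdisj' : Disjoint (S a) {y ∈ Y | w (y, a) = c'} := by
        rw [Set.disjoint_left]
        rintro y hyS ⟨hyY, hyw⟩
        have : y ∉ {y ∈ Y | c ≤ Real.exp (-α * a) * w (y, a)} :=
          Set.disjoint_left.mp hdisj hyS
        have hexp : Real.exp (-α * t) ≤ Real.exp (-α * a) := by
          apply Real.exp_le_exp.mpr; nlinarith [ht.1]
        exact this ⟨hyY, by rw [hyw]; nlinarith⟩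
      have := (hlevel c').2.2 a b hab hI S hS hdisj' t ht
      exact Set.disjoint_left.mp this hxS ⟨hxY, rfl⟩
  · refine ⟨fun t _ x hx => hx.1, ?_, ?_⟩
    · rintro ⟨x, t⟩ hp hxY htI
      refine ⟨hxY, ?_⟩
      set A : Set (EuclideanSpace ℝ (Fin (n + 1)) × ℝ) :=
        {q | q.2 ∈ Set.Icc 0 T ∧ q.1 ∈ Y ∧ Real.exp (-α * q.2) * w (q.1, q.2) ≤ -c} with hA
      have hne : (nhdsWithin (x, t) A).NeBot := mem_closure_iff_nhdsWithin_neBot.mp hp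
      have hAsub : A ⊆ Y ×ˢ Set.Icc 0 T := fun q hq => ⟨hq.2.1, hq.1⟩
      have hcw : ContinuousWithinAt (fun q : EuclideanSpace ℝ (Fin (n + 1)) × ℝ =>
          Real.exp (-α * q.2) * w q) A (x, t) := by
        refine ContinuousWithinAt.mul ?_ (((hw (x, t) ⟨hxY, htI⟩).mono hAsub))
        exact (Real.continuous_exp.comp (continuous_const.mul continuous_snd)).continuousWithinAt
      refine le_of_tendsto hcw.tendsto ?_
      filter_upwards [eventually_mem_nhdsWithin] with q hq
      exact hq.2.2
    · intro a b hab hI S hS hdisj t ht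
      rw [Set.disjoint_left]
      rintro x hxS ⟨hxY, hxw⟩
      set c' : ℝ := w (x, t) with hc'
      have hpos : (0:ℝ) < Real.exp (-α * t) := Real.exp_pos _
      have hc'neg : c' < 0 := by nlinarith
      have hdisj' : Disjoint (S a) {y ∈ Y | w (y, a) = c'} := by
        rw [Set.disjoint_left]
        rintro y hyS ⟨hyY, hyw⟩
        have : y ∉ {y ∈ Y | Real.exp (-α * a) * w (y, a) ≤ -c} :=
          Set.disjoint_left.mp hdisj hyS
        have hexp : Real.exp (-α * t) ≤ Real.exp (-α * a) := by
          apply Real.exp_le_exp.mpr; nlinarith [ht.1]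
        exact this ⟨hyY, by rw [hyw]; nlinarith⟩
      have := (hlevel c').2.2 a b hab hI S hS hdisj' t ht
      exact Set.disjoint_left.mp this hxS ⟨hxY, rfl⟩
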